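/- Let $f : [a,b] \to \mathbb{R}$ be continuous and differentiable on $(a,p) \cup (p,b)$ for some $p \in (a,b)$, with $|f'| \le M_1$ on $(a,p)$ and $|f'| \le M_2$ on $(p,b)$. Then for the midpoint $p = \frac{a+b}{2}$, $\left| f\left(\tfrac{a+b}{2}\right) - \frac{1}{b-a}\int_a^b f(t)\,dt \right| \le \frac{b-a}{4}\max\{M_1, M_2\}$. -/

import Mathlib

/-!
By the mean value theorem on each side of `p`, `|f t - f p| ≤ M * |t - p|` on `[a, b]`, where
`M = max M₁ M₂`. Integrating this over `[a, b]` bounds `|(b - a) f p - ∫ f|` by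
`M ∫ |t - p| = M ((p - a)² + (b - p)²) / 2`, which is `M (b - a)² / 4` at the midpoint.
-/

open Set intervalIntegral
open scoped Interval

section

variable {f f' : ℝ → ℝ} {a b p C : ℝ}

theorem abs_sub_le_of_hasDerivAt_Ioo_of_abs_le (hab : a ≤ b) (hf : ContinuousOn f (Icc a b))
    (hderiv : ∀ t ∈ Ioo a b, HasDerivAt f (f' t) t) (hbound : ∀ t ∈ Ioo a b, |f' t| ≤ C) :
    |f b - f a| ≤ C * (b - a) := by
  rcases hab.eq_or_lt with rfl | hlt
  · simp
  obtain ⟨c, hc, hslope⟩ := exists_hasDerivAt_eq_slope f f' hlt hf hderiv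
  rw [eq_div_iff (sub_pos.2 hlt).ne'] at hslope
  calc |f b - f a| = |f' c| * (b - a) := by rw [← hslope, abs_mul, abs_of_pos (sub_pos.2 hlt)]
    _ ≤ C * (b - a) := mul_le_mul_of_nonneg_right (hbound c hc) (sub_nonneg.2 hab)

theorem abs_sub_le_mul_abs_sub_of_piecewise_hasDerivAt (hp : p ∈ Icc a b)
    (hf : ContinuousOn f (Icc a b))
    (hderiv₁ : ∀ t ∈ Ioo a p, HasDerivAt f (f' t) t) (hbound₁ : ∀ t ∈ Ioo a p, |f' t| ≤ C)
    (hderiv₂ : ∀ t ∈ Ioo p b, HasDerivAt f (f' t) t) (hbound₂ : ∀ t ∈ Ioo p b, |f' t| ≤ C)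
    {t : ℝ} (ht : t ∈ Icc a b) : |f t - f p| ≤ C * |t - p| := by
  rcases le_total t p with htp | hpt
  · have hsub : Ioo t p ⊆ Ioo a p := Ioo_subset_Ioo_left ht.1
    rw [abs_sub_comm, abs_sub_comm t, abs_of_nonneg (sub_nonneg.2 htp)]
    exact abs_sub_le_of_hasDerivAt_Ioo_of_abs_le htp (hf.mono (Icc_subset_Icc ht.1 hp.2))
      (fun x hx => hderiv₁ x (hsub hx)) (fun x hx => hbound₁ x (hsub hx))
  · have hsub : Ioo p t ⊆ Ioo p b := Ioo_subset_Ioo_right ht.2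
    rw [abs_of_nonneg (sub_nonneg.2 hpt)]
    exact abs_sub_le_of_hasDerivAt_Ioo_of_abs_le hpt (hf.mono (Icc_subset_Icc hp.1 ht.2))
      (fun x hx => hderiv₂ x (hsub hx)) (fun x hx => hbound₂ x (hsub hx))

theorem integral_abs_sub_of_mem_Icc (hp : p ∈ Icc a b) :
    ∫ t in a..b, |t - p| = ((p - a) ^ 2 + (b - p) ^ 2) / 2 := by
  have hhalf (x : ℝ) : ∫ t in Ι p x, |t - p| = (x - p) ^ 2 / 2 := by
    simpa [sq_abs, one_add_one_eq_two] using integral_pow_abs_sub_uIoc (a := p) (b := x) (n := 1)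
  have hint (x y : ℝ) : IntervalIntegrable (fun t => |t - p|) MeasureTheory.volume x y :=
    (by fun_prop : Continuous fun t => |t - p|).intervalIntegrable x y
  rw [← integral_add_adjacent_intervals (hint a p) (hint p b), integral_of_le hp.1,
    integral_of_le hp.2, ← uIoc_of_ge hp.1, ← uIoc_of_le hp.2, hhalf, hhalf]
  ring

theorem abs_mul_sub_integral_le_ostrowski (hp : p ∈ Icc a b) (hf : ContinuousOn f (Icc a b))
    (hderiv₁ : ∀ t ∈ Ioo a p, HasDerivAt f (f' t) t) (hbound₁ : ∀ t ∈ Ioo a p, |f' t| ≤ C)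
    (hderiv₂ : ∀ t ∈ Ioo p b, HasDerivAt f (f' t) t) (hbound₂ : ∀ t ∈ Ioo p b, |f' t| ≤ C) :
    |(b - a) * f p - ∫ t in a..b, f t| ≤ C * ((p - a) ^ 2 + (b - p) ^ 2) / 2 := by
  have hab : a ≤ b := hp.1.trans hp.2
  have hfint : IntervalIntegrable f MeasureTheory.volume a b := hf.intervalIntegrable_of_Icc hab
  calc |(b - a) * f p - ∫ t in a..b, f t| = |∫ t in a..b, (f p - f t)| := by
        rw [integral_sub intervalIntegrable_const hfint, integral_const, smul_eq_mul]
    _ ≤ ∫ t in a..b, |f p - f t| := abs_integral_le_integral_abs hab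
    _ ≤ ∫ t in a..b, C * |t - p| := by
        refine integral_mono_on hab (intervalIntegrable_const.sub hfint).abs
          ((by fun_prop : Continuous fun t => C * |t - p|).intervalIntegrable a b) fun t ht => ?_
        rw [abs_sub_comm]
        exact abs_sub_le_mul_abs_sub_of_piecewise_hasDerivAt hp hf hderiv₁ hbound₁ hderiv₂
          hbound₂ ht
    _ = C * ((p - a) ^ 2 + (b - p) ^ 2) / 2 := by
        rw [integral_const_mul, integral_abs_sub_of_mem_Icc hp, mul_div_assoc]

end

theorem ostrowski_midpoint_refinement_general (a b M₁ M₂ : ℝ) (f f' : ℝ → ℝ)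
    (hab : a < b)
    (hf : ContinuousOn f (Set.Icc a b))
    (hderiv₁ : ∀ t ∈ Set.Ioo a ((a + b) / 2), HasDerivAt f (f' t) t)
    (hbound₁ : ∀ t ∈ Set.Ioo a ((a + b) / 2), |f' t| ≤ M₁)
    (hderiv₂ : ∀ t ∈ Set.Ioo ((a + b) / 2) b, HasDerivAt f (f' t) t)
    (hbound₂ : ∀ t ∈ Set.Ioo ((a + b) / 2) b, |f' t| ≤ M₂) :
    |f ((a + b) / 2) - (1 / (b - a)) * ∫ t in a..b, f t| ≤
      (b - a) / 4 * max M₁ M₂ := by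
  have hba : 0 < b - a := sub_pos.2 hab
  have hmid : (a + b) / 2 ∈ Icc a b := ⟨by linarith, by linarith⟩
  have hostrowski := abs_mul_sub_integral_le_ostrowski hmid hf hderiv₁
    (fun t ht => (hbound₁ t ht).trans (le_max_left M₁ M₂)) hderiv₂
    (fun t ht => (hbound₂ t ht).trans (le_max_right M₁ M₂))
  have hrescale : f ((a + b) / 2) - (1 / (b - a)) * ∫ t in a..b, f t =
      ((b - a) * f ((a + b) / 2) - ∫ t in a..b, f t) / (b - a) := by
    field_simp
  rw [hrescale, abs_div, abs_of_pos hba, div_le_iff₀ hba]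
  calc _ ≤ max M₁ M₂ * (((a + b) / 2 - a) ^ 2 + (b - (a + b) / 2) ^ 2) / 2 := hostrowski
    _ = (b - a) / 4 * max M₁ M₂ * (b - a) := by ring

theorem ostrowski_midpoint_refinement (a b M₁ M₂ : ℝ) (f f' : ℝ → ℝ)
    (hab : a < b) (hM₁ : 0 ≤ M₁) (hM₂ : 0 ≤ M₂)
    (hf : ContinuousOn f (Set.Icc a b))
    (hderiv₁ : ∀ t ∈ Set.Ioo a ((a + b) / 2), HasDerivAt f (f' t) t)
    (hbound₁ : ∀ t ∈ Set.Ioo a ((a + b) / 2), |f' t| ≤ M₁)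
    (hderiv₂ : ∀ t ∈ Set.Ioo ((a + b) / 2) b, HasDerivAt f (f' t) t)
    (hbound₂ : ∀ t ∈ Set.Ioo ((a + b) / 2) b, |f' t| ≤ M₂) :
    |f ((a + b) / 2) - (1 / (b - a)) * ∫ t in a..b, f t| ≤
      (b - a) / 4 * max M₁ M₂ :=
  ostrowski_midpoint_refinement_general a b M₁ M₂ f f' hab hf hderiv₁ hbound₁ hderiv₂ hbound₂
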